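/- Let P be a monotone-constraint program, M a supported model of P, and suppose P is tight on M. Then M is a stable model of P (Fages Lemma for monotone-constraint programs). -/

import Mathlib

universe u

/-- A constraint `A = (X, C)`: domain `X` and a family `C` of subsets of `X`. -/
structure Constraint (α : Type u) where
  dom : Set α
  sat : Set (Set α)
  sat_sub : ∀ Y ∈ sat, Y ⊆ dom

/-- `M ⊨ A` iff `M ∩ Dom(A) ∈ C`. -/
def Constraint.Sat {α : Type u} (M : Set α) (A : Constraint α) : Prop :=
  M ∩ A.dom ∈ A.sat

/-- A constraint is monotone if its satisfying family is closed under supersets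
within the domain. -/
def Constraint.Mono {α : Type u} (A : Constraint α) : Prop :=
  ∀ W Y : Set α, W ∈ A.sat → W ⊆ Y → Y ⊆ A.dom → Y ∈ A.sat

/-- A rule `A ← A₁,…,A_k, not(A_{k+1}),…,not(A_m)`. -/
structure Rule (α : Type u) where
  head : Constraint α
  pos : Set (Constraint α)
  neg : Set (Constraint α)

/-- A constraint program is a set of rules. -/
abbrev Program (α : Type u) := Set (Rule α)

def Rule.Horn {α : Type u} (r : Rule α) : Prop := r.neg = ∅

def Rule.Mono {α : Type u} (r : Rule α) : Prop :=
  r.head.Mono ∧ (∀ A ∈ r.pos, A.Mono) ∧ (∀ A ∈ r.neg, A.Mono)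

def Program.Horn {α : Type u} (P : Program α) : Prop := ∀ r ∈ P, r.Horn

def Program.Mono {α : Type u} (P : Program α) : Prop := ∀ r ∈ P, r.Mono

/-- `M` satisfies the body of `r`. -/
def Rule.BodySat {α : Type u} (M : Set α) (r : Rule α) : Prop :=
  (∀ A ∈ r.pos, Constraint.Sat M A) ∧ (∀ A ∈ r.neg, ¬ Constraint.Sat M A)

/-- `P(M)`: the set of `M`-applicable rules of `P`. -/
def Program.app {α : Type u} (P : Program α) (M : Set α) : Program α :=
  {r ∈ P | r.BodySat M}

/-- `hset(r) = Dom(hd(r))`. -/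
def Rule.hset {α : Type u} (r : Rule α) : Set α := r.head.dom

/-- `hset(P)`: union of the headsets of rules of `P`. -/
def Program.hset {α : Type u} (P : Program α) : Set α := ⋃ r ∈ P, r.hset

def Rule.atoms {α : Type u} (r : Rule α) : Set α :=
  r.head.dom ∪ (⋃ A ∈ r.pos, A.dom) ∪ (⋃ A ∈ r.neg, A.dom)

/-- `At(P)`: atoms occurring in domains of constraints of `P`. -/
def Program.atoms {α : Type u} (P : Program α) : Set α := ⋃ r ∈ P, r.atoms

/-- `M` is a model of `P`. -/
def Program.IsModel {α : Type u} (P : Program α) (M : Set α) : Prop :=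
  ∀ r ∈ P, r.BodySat M → Constraint.Sat M r.head

/-- `M` is a supported model of `P`. -/
def Program.Supported {α : Type u} (P : Program α) (M : Set α) : Prop :=
  P.IsModel M ∧ M ⊆ (P.app M).hset

/-- The nondeterministic one-step provability operator `T_P^nd`. -/
def Program.Tnd {α : Type u} (P : Program α) (M : Set α) : Set (Set α) :=
  {M' | M' ⊆ (P.app M).hset ∧ ∀ r ∈ P.app M, Constraint.Sat M' r.head}

/-- A `P`-computation: a transfinite sequence starting at `∅`, increasing, with
each successor step nondeterministically one-step provable, continuous at limits. -/
structure PComputation {α : Type u} (P : Program α) where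
  X : Ordinal.{u} → Set α
  zero : X 0 = ∅
  incr : ∀ o, X o ⊆ X (o + 1)
  step : ∀ o, X (o + 1) ∈ P.Tnd (X o)
  limit : ∀ o : Ordinal.{u}, Order.IsSuccLimit o → X o = ⋃ β < o, X β

/-- The result `R_t` of a computation. -/
def PComputation.result {α : Type u} {P : Program α} (t : PComputation P) : Set α :=
  ⋃ o, t.X o

/-- `M` is a derivable model of `P`: the result of some `P`-computation. -/
def Program.Derivable {α : Type u} (P : Program α) (M : Set α) : Prop :=
  ∃ t : PComputation P, t.result = M

/-- The canonical sequence `t^{P,M}`: `X₀ = ∅`, `X_{β+1} = hset(P(X_β)) ∩ M`,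
unions at limits. -/
noncomputable def canSeq {α : Type u} (P : Program α) (M : Set α) (o : Ordinal.{u}) :
    Set α :=
  Ordinal.limitRecOn o ∅ (fun _ ih => (P.app ih).hset ∩ M)
    (fun o _ ih => ⋃ β : Ordinal.{u}, ⋃ h : β < o, ih β h)

/-- `Can(P,M)`: the result of the canonical computation. -/
noncomputable def Can {α : Type u} (P : Program α) (M : Set α) : Set α :=
  ⋃ o, canSeq P M o

/-- The reduct of a single rule: drop negated literals. -/
def Rule.pos_part {α : Type u} (r : Rule α) : Rule α := ⟨r.head, r.pos, ∅⟩

/-- The reduct `P^M`. -/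
def Program.reduct {α : Type u} (P : Program α) (M : Set α) : Program α :=
  {r' | ∃ r ∈ P, (∀ A ∈ r.neg, ¬ Constraint.Sat M A) ∧ r' = r.pos_part}

/-- `M` is a stable model of `P`: a derivable model of the reduct `P^M`. -/
def Program.Stable {α : Type u} (P : Program α) (M : Set α) : Prop :=
  (P.reduct M).Derivable M

/-- `N ⊨_M P`: `N` is an `M`-maximal model of the Horn program `P`. -/
def Program.MMax {α : Type u} (P : Program α) (M N : Set α) : Prop :=
  N ⊆ M ∧ P.IsModel N ∧ M ∩ (P.app N).hset ⊆ N

/-- `(X,Y)` is an SE-model of `P`. -/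
def Program.SE {α : Type u} (P : Program α) (X Y : Set α) : Prop :=
  X ⊆ Y ∧ P.IsModel Y ∧ (P.reduct Y).MMax Y X

/-- `(X,Y)` is a UE-model of `P`. -/
def Program.UE {α : Type u} (P : Program α) (X Y : Set α) : Prop :=
  P.SE X Y ∧ ∀ X', P.SE X' Y → X ⊆ X' → X = X' ∨ X' = Y

/-- Strong equivalence of monotone-constraint programs. -/
def StrongEq {α : Type u} (P Q : Program α) : Prop :=
  ∀ R : Program α, R.Mono → ∀ M : Set α, (P ∪ R).Stable M ↔ (Q ∪ R).Stable M

/-- The rule `(D,{D}) ←`. -/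
def factRule {α : Type u} (D : Set α) : Rule α :=
  ⟨⟨D, {D}, fun Y hY => by simp only [Set.mem_singleton_iff] at hY; simp [hY]⟩, ∅, ∅⟩

/-- Uniform equivalence of monotone-constraint programs. -/
def UnifEq {α : Type u} (P Q : Program α) : Prop :=
  ∀ D : Set α, ∀ M : Set α,
    (P ∪ {factRule D}).Stable M ↔ (Q ∪ {factRule D}).Stable M

/-- `P` is tight on `M`. -/
def Program.Tight {α : Type u} (P : Program α) (M : Set α) : Prop :=
  ∃ lam : α → Ordinal.{u}, ∀ r ∈ P.app M, ∀ x ∈ M ∩ r.hset,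
    ∀ a ∈ M ∩ (⋃ A ∈ r.pos, A.dom), lam a < lam x

/-!
The canonical sequence of the reduct `P^M` relative to `M` is a `P^M`-computation, because
`P^M` is a monotone Horn program of which `M` is a model; its result `Can(P^M, M)` lies in `M`.
Tightness gives the reverse inclusion: by induction on the level `λ x`, every `x ∈ M` enters at
stage `λ x + 1`. Indeed a rule of `P(M)` supporting `x` has all the atoms of `M` in its positive
body at lower levels, hence already in stage `λ x`, where that body is therefore evaluated
exactly as on `M`.
-/

theorem Ordinal.monotone_of_le_add_one {β : Type*} [Preorder β] {f : Ordinal.{u} → β}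
    (hsucc : ∀ o, f o ≤ f (o + 1))
    (hlim : ∀ o, Order.IsSuccLimit o → ∀ b < o, f b ≤ f o) : Monotone f := by
  intro o₁ o₂ h
  induction o₂ using Ordinal.limitRecOn with
  | zero => rw [nonpos_iff_eq_zero.mp h]
  | add_one o ih =>
    rcases h.lt_or_eq with h | rfl
    · exact (ih (Order.lt_add_one_iff.mp h)).trans (hsucc o)
    · rfl
  | limit o ho _ =>
    rcases h.lt_or_eq with h | rfl
    · exact hlim o ho o₁ h
    · rfl

namespace Constraint

variable {α : Type u} {A : Constraint α} {S T : Set α}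

theorem Sat.mono (hA : A.Mono) (hST : S ⊆ T) (h : Sat S A) : Sat T A :=
  hA _ _ h (Set.inter_subset_inter_left _ hST) Set.inter_subset_right

theorem sat_of_inter_dom_eq (hST : S ∩ A.dom = T ∩ A.dom) (h : Sat T A) : Sat S A := by
  unfold Sat
  rwa [hST]

end Constraint

namespace Program

variable {α : Type u}

theorem hset_mono : Monotone (Program.hset (α := α)) := fun _ _ h =>
  Set.biUnion_subset_biUnion_left h

theorem app_mono {Q : Program α} (hQ : Q.Mono) (hH : Q.Horn) : Monotone Q.app := by
  rintro S T hST r ⟨hrQ, hpos, -⟩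
  refine ⟨hrQ, fun A hA => (hpos A hA).mono ((hQ r hrQ).2.1 A hA) hST, ?_⟩
  exact fun A hA => (Set.notMem_empty A (hH r hrQ ▸ hA)).elim

theorem reduct_horn (P : Program α) (M : Set α) : (P.reduct M).Horn := by
  rintro _ ⟨r, -, -, rfl⟩
  rfl

theorem Mono.reduct {P : Program α} (hP : P.Mono) (M : Set α) : (P.reduct M).Mono := by
  rintro _ ⟨r, hr, -, rfl⟩
  exact ⟨(hP r hr).1, (hP r hr).2.1, fun _ h => (Set.notMem_empty _ h).elim⟩

theorem IsModel.reduct {P : Program α} {M : Set α} (hM : P.IsModel M) :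
    (P.reduct M).IsModel M := by
  rintro _ ⟨r, hr, hneg, rfl⟩ ⟨hpos, -⟩
  exact hM r hr ⟨hpos, hneg⟩

theorem pos_part_mem_reduct_app {P : Program α} {M S : Set α} {r : Rule α} (hr : r ∈ P.app M)
    (hSM : S ⊆ M) (hbody : M ∩ ⋃ A ∈ r.pos, A.dom ⊆ S) : r.pos_part ∈ (P.reduct M).app S := by
  obtain ⟨hrP, hpos, hneg⟩ := hr
  refine ⟨⟨r, hrP, hneg, rfl⟩, fun A hA => ?_, fun _ h => (Set.notMem_empty _ h).elim⟩
  refine Constraint.sat_of_inter_dom_eq ?_ (hpos A hA)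
  exact (Set.inter_subset_inter_left _ hSM).antisymm
    fun a ⟨haM, haA⟩ => ⟨hbody ⟨haM, Set.mem_biUnion hA haA⟩, haA⟩

end Program

open Program

section Canonical

variable {α : Type u} (P : Program α) (M : Set α)

theorem canSeq_zero : canSeq P M 0 = ∅ := by
  simp [canSeq]

theorem canSeq_add_one (o : Ordinal.{u}) :
    canSeq P M (o + 1) = (P.app (canSeq P M o)).hset ∩ M := by
  unfold canSeq
  rw [Ordinal.limitRecOn_add_one]

theorem canSeq_limit {o : Ordinal.{u}} (ho : Order.IsSuccLimit o) :
    canSeq P M o = ⋃ β < o, canSeq P M β := by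
  unfold canSeq
  rw [Ordinal.limitRecOn_limit _ _ _ _ ho]

theorem canSeq_subset (o : Ordinal.{u}) : canSeq P M o ⊆ M := by
  induction o using Ordinal.limitRecOn with
  | zero => simp [canSeq_zero]
  | add_one o _ => simp [canSeq_add_one]
  | limit o ho ih =>
    rw [canSeq_limit P M ho]
    exact Set.iUnion₂_subset ih

theorem can_subset : Can P M ⊆ M :=
  Set.iUnion_subset (canSeq_subset P M)

variable {P}

theorem canSeq_subset_add_one (hP : P.Mono) (hH : P.Horn) (o : Ordinal.{u}) :
    canSeq P M o ⊆ canSeq P M (o + 1) := by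
  have hstep : Monotone fun S => (P.app S).hset ∩ M := fun _ _ h =>
    Set.inter_subset_inter_left M (hset_mono (app_mono hP hH h))
  induction o using Ordinal.limitRecOn with
  | zero => simp [canSeq_zero]
  | add_one o ih =>
    calc canSeq P M (o + 1) = (P.app (canSeq P M o)).hset ∩ M := canSeq_add_one P M o
      _ ⊆ (P.app (canSeq P M (o + 1))).hset ∩ M := hstep ih
      _ = canSeq P M (o + 1 + 1) := (canSeq_add_one P M (o + 1)).symm
  | limit o ho ih =>
    rw [canSeq_add_one, canSeq_limit P M ho]
    refine Set.iUnion₂_subset fun β hβ => (ih β hβ).trans ?_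
    rw [canSeq_add_one]
    exact hstep (Set.subset_iUnion₂ (s := fun β _ => canSeq P M β) β hβ)

theorem canSeq_mono (hP : P.Mono) (hH : P.Horn) : Monotone (canSeq P M) :=
  Ordinal.monotone_of_le_add_one (canSeq_subset_add_one M hP hH) fun _ ho β hβ => by
    rw [canSeq_limit P M ho]
    exact Set.subset_iUnion₂ (s := fun β _ => canSeq P M β) β hβ

theorem derivable_can (hP : P.Mono) (hH : P.Horn) (hM : P.IsModel M) :
    P.Derivable (Can P M) := by
  refine ⟨⟨canSeq P M, canSeq_zero P M, canSeq_subset_add_one M hP hH, fun o => ?_,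
    fun _ ho => canSeq_limit P M ho⟩, rfl⟩
  rw [canSeq_add_one]
  refine ⟨Set.inter_subset_left, fun r hr => ?_⟩
  have hrM : r ∈ P.app M := app_mono hP hH (canSeq_subset P M o) hr
  have hdom : r.head.dom ⊆ (P.app (canSeq P M o)).hset := Set.subset_biUnion_of_mem (u := Rule.hset) hr
  refine Constraint.sat_of_inter_dom_eq ?_ (hM r hrM.1 hrM.2)
  exact (Set.inter_subset_inter_left _ Set.inter_subset_right).antisymm
    fun a ⟨haM, haD⟩ => ⟨⟨hdom haD, haM⟩, haD⟩

end Canonical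

theorem subset_can_reduct_of_tight {α : Type u} {P : Program α} (hP : P.Mono) {M : Set α}
    (hSupp : M ⊆ (P.app M).hset) (hTight : P.Tight M) : M ⊆ Can (P.reduct M) M := by
  obtain ⟨lam, hlam⟩ := hTight
  have hmono := canSeq_mono M (hP.reduct M) (reduct_horn P M)
  suffices h : ∀ o, ∀ x ∈ M, lam x = o → x ∈ canSeq (P.reduct M) M (o + 1) from
    fun x hx => Set.mem_iUnion.mpr ⟨lam x + 1, h _ x hx rfl⟩
  intro o
  induction o using WellFoundedLT.induction with
  | ind o ih =>
    rintro x hxM rfl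
    obtain ⟨r, hr, hxr⟩ := Set.mem_iUnion₂.mp (hSupp hxM)
    have hbody : M ∩ ⋃ A ∈ r.pos, A.dom ⊆ canSeq (P.reduct M) M (lam x) := fun a ha =>
      have hlt := hlam r hr x ⟨hxM, hxr⟩ a ha
      hmono (Order.add_one_le_of_lt hlt) (ih _ hlt a ha.1 rfl)
    rw [canSeq_add_one]
    exact ⟨Set.mem_biUnion (pos_part_mem_reduct_app hr (canSeq_subset _ M _) hbody) hxr, hxM⟩

theorem fages_lemma_general {α : Type u} (P : Program α) (hMono : P.Mono)
    (M : Set α) (hSupp : P.Supported M) (hTight : P.Tight M) :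
    P.Stable M := by
  have h := derivable_can M (hMono.reduct M) (reduct_horn P M) hSupp.1.reduct
  rwa [(can_subset _ M).antisymm (subset_can_reduct_of_tight hMono hSupp.2 hTight)] at h

/-- Fages Lemma: A supported model of a monotone-constraint
program that is tight on it is stable. -/
theorem fages_lemma {α : Type u} (P : Program α) (hMono : P.Mono)
    (M : Set α) (hsub : M ⊆ P.atoms) (hSupp : P.Supported M) (hTight : P.Tight M) :
    P.Stable M :=
  fages_lemma_general P hMono M hSupp hTight
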